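/- arXiv:1305.0656 — 2 statements merged into one kernel-verified Lean document; each statement's English description precedes it below -/
import Mathlib

section
/- Let z ∈ ℂ and let u be a solution of the interface equation −u'' = z u for μ on an interval [s, t] with s, t ∉ {t_n : n}. Then W(u, ū)(t) − W(u, ū)(s) = (conj(z) − z) · ∫_s^t |u(r)|² dr, where ū is the pointwise complex conjugate of u. In particular, if Im z > 0, t > s, and u(s) = 0 with u not identically zero, then W(u, ū)(t) = −2i · (Im z) · ∫_s^t |u(r)|² dr ≠ 0. -/
/-
Off the atoms, `W(u, ū)' = u'' ū - u ū'' = (z̄ - z) |u|²`. At an atom the interface conditions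
multiply `u` by the real number `√bₙ` and `u'` by `1 / √bₙ`, which leaves `W(u, ū)` unchanged;
so `W(u, ū)` has the same limit from both sides of every atom and extends to a continuous
function on `[s, τ]`. Since the atoms are countable, the fundamental theorem of calculus off
a countable set gives the identity. If moreover `u(s) = 0`, then `W(u, ū)(s) = 0`,
and `∫ |u|² > 0` because `u` is continuous off the atoms and nonzero at some point there.
-/

open Set Filter Topology MeasureTheory

/-- The part of the interval `J` off the atoms `{tₙ}`. -/
def offAtoms (ts : ℕ → ℝ) (J : Set ℝ) : Set ℝ := J \ Set.range ts

/-- One-sided limits of `u` and its derivative exist at the atom `ts n`, and the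
interface conditions `u(tₙ+) = √bₙ · u(tₙ-)`, `u'(tₙ+) = u'(tₙ-)/√bₙ` hold. -/
def InterfaceAt (ts bs : ℕ → ℝ) (S : Set ℝ) (u : ℝ → ℂ) (n : ℕ) : Prop :=
  ∃ uL uR duL duR : ℂ,
    Tendsto u (nhdsWithin (ts n) (S ∩ Iio (ts n))) (nhds uL) ∧
    Tendsto u (nhdsWithin (ts n) (S ∩ Ioi (ts n))) (nhds uR) ∧
    Tendsto (derivWithin u S) (nhdsWithin (ts n) (S ∩ Iio (ts n))) (nhds duL) ∧
    Tendsto (derivWithin u S) (nhdsWithin (ts n) (S ∩ Ioi (ts n))) (nhds duR) ∧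
    uR = (Real.sqrt (bs n) : ℂ) * uL ∧
    duR = duL / (Real.sqrt (bs n) : ℂ)

/-- `u` is a solution of the interface equation `-u'' = z·u` for the atomic measure
with atoms `ts n` and branching numbers `bs n`, on the interval `J`:
`u` is twice continuously differentiable on `J` off the atoms with `-u'' = z·u` there,
and at every atom in the interior of `J` it has one-sided limits satisfying
the interface conditions. -/
def IsInterfaceSolution (ts bs : ℕ → ℝ) (z : ℂ) (J : Set ℝ) (u : ℝ → ℂ) : Prop :=
  ContDiffOn ℝ 2 u (offAtoms ts J) ∧
  (∀ x ∈ offAtoms ts J,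
      -(derivWithin (derivWithin u (offAtoms ts J)) (offAtoms ts J) x) = z * u x) ∧
  (∀ n, ts n ∈ interior J → InterfaceAt ts bs (offAtoms ts J) u n)

/-- The Wronskian `W(f, g)(r) = f'(r)·g(r) - f(r)·g'(r)`, with derivatives taken
within the set `S`. -/
noncomputable def wron (S : Set ℝ) (f g : ℝ → ℂ) (r : ℝ) : ℂ :=
  derivWithin f S r * g r - f r * derivWithin g S r

/-- The Wronskian `W(f, ḡ)(r)` of `f` and the pointwise complex conjugate of `g`. -/
noncomputable def wronConj (S : Set ℝ) (f g : ℝ → ℂ) (r : ℝ) : ℂ :=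
  derivWithin f S r * (starRingEnd ℂ) (g r)
    - f r * (starRingEnd ℂ) (derivWithin g S r)

open ComplexConjugate

lemma nhdsWithin_diff_of_notMem {X : Type*} [TopologicalSpace X] {T : Set X}
    (hT : Tᶜ ∈ codiscrete X) {x : X} (hx : x ∉ T) (J : Set X) : 𝓝[J \ T] x = 𝓝[J] x :=
  nhdsWithin_inter_of_mem' (mem_nhdsWithin_of_mem_nhds ((mem_codiscrete'.1 hT).1.mem_nhds hx))

lemma nhdsWithin_eq_inter_Iio_sup_inter_Ioi {α : Type*} [TopologicalSpace α] [LinearOrder α]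
    {S : Set α} {x : α} (hx : x ∉ S) :
    𝓝[S] x = 𝓝[S ∩ Iio x] x ⊔ 𝓝[S ∩ Ioi x] x := by
  rw [← nhdsWithin_union, ← inter_union_distrib_left, Iio_union_Ioi, ← sdiff_eq,
    sdiff_singleton_eq_self hx]

lemma IsCompact.exists_bound_of_isBoundedUnder {X E : Type*} [TopologicalSpace X]
    [SeminormedAddCommGroup E] {K S : Set X} {f : X → E} (hK : IsCompact K)
    (hf : ∀ x ∈ K, IsBoundedUnder (· ≤ ·) (𝓝[S] x) (‖f ·‖)) :
    ∃ C, ∀ y ∈ K ∩ S, ‖f y‖ ≤ C := by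
  refine hK.induction_on (p := fun V => ∃ C, ∀ y ∈ V ∩ S, ‖f y‖ ≤ C) ⟨0, by simp⟩
    (fun V W hVW ⟨C, hC⟩ => ⟨C, fun y hy => hC y ⟨hVW hy.1, hy.2⟩⟩)
    (fun V W ⟨C, hC⟩ ⟨D, hD⟩ => ⟨max C D, ?_⟩) fun x hx => ?_
  · rintro y ⟨hy | hy, hyS⟩
    exacts [(hC y ⟨hy, hyS⟩).trans (le_max_left _ _), (hD y ⟨hy, hyS⟩).trans (le_max_right _ _)]
  · obtain ⟨C, hC⟩ := hf x hx
    obtain ⟨V, hV, hVS⟩ := mem_nhdsWithin_iff_exists_mem_nhds_inter.1 (eventually_map.1 hC)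
    exact ⟨V, mem_nhdsWithin_of_mem_nhds hV, C, fun y hy => hVS hy⟩

lemma IsOpen.measure_pos_of_mem_nhdsWithin {X : Type*} [TopologicalSpace X] [MeasurableSpace X]
    (μ : Measure X) [μ.IsOpenPosMeasure] {U A : Set X} {x : X} (hU : IsOpen U)
    (hx : x ∈ closure U) (hA : A ∈ 𝓝[U] x) : 0 < μ A := by
  obtain ⟨V, hVo, hxV, hVA⟩ := mem_nhdsWithin.1 hA
  exact ((hVo.inter hU).measure_pos μ (mem_closure_iff.1 hx V hVo hxV)).trans_le (measure_mono hVA)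

lemma hasDerivAt_wronskian_conj {u u' : ℝ → ℂ} {z : ℂ} {x : ℝ}
    (hu : HasDerivAt u (u' x) x) (hu' : HasDerivAt u' (-(z * u x)) x) :
    HasDerivAt (fun r => u' r * conj (u r) - u r * conj (u' r))
      ((conj z - z) * ((‖u x‖ ^ 2 : ℝ) : ℂ)) x := by
  refine ((hu'.mul hu.star).sub (hu.mul hu'.star)).congr_deriv ?_
  push_cast
  rw [← Complex.mul_conj']
  simp only [star_neg, star_mul', Complex.star_def]
  ring

lemma wronskian_conj_rescale {c : ℝ} (hc : c ≠ 0) (a d : ℂ) :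
    d / c * conj (c * a) - c * a * conj (d / c) = d * conj a - a * conj d := by
  have hc' : (c : ℂ) ≠ 0 := by exact_mod_cast hc
  rw [map_mul, map_div₀, Complex.conj_ofReal]
  field_simp

lemma StrictMono.compl_range_mem_codiscrete {ts : ℕ → ℝ} {γ : ℝ} (hγ : 0 < γ)
    (hts : StrictMono ts) (hgap : ∀ n, γ ≤ ts (n + 1) - ts n) :
    (range ts)ᶜ ∈ codiscrete ℝ := by
  have hsep : Pairwise fun m n => γ ≤ dist (ts m) (ts n) := by
    have key : ∀ m n, m < n → γ ≤ ts n - ts m := fun m n hmn =>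
      (hgap m).trans (by linarith [hts.monotone (Nat.succ_le_of_lt hmn)])
    intro m n hmn
    rw [Real.dist_eq]
    rcases hmn.lt_or_gt with h | h
    · rw [abs_sub_comm]; exact (key m n h).trans (le_abs_self _)
    · exact (key n m h).trans (le_abs_self _)
  have he := Metric.isClosedEmbedding_of_pairwise_le_dist hγ hsep
  exact compl_mem_codiscrete_iff.2 ⟨he.isClosed_range, he.isEmbedding.isDiscrete_range⟩

lemma InterfaceAt.exists_tendsto_wronConj {ts bs : ℕ → ℝ} {S : Set ℝ} {u : ℝ → ℂ} {n : ℕ}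
    (h : InterfaceAt ts bs S u n) (hb : 0 < bs n) (hn : ts n ∉ S) :
    ∃ L, Tendsto (wronConj S u u) (𝓝[S] (ts n)) (𝓝 L) := by
  obtain ⟨uL, uR, duL, duR, hL, hR, hdL, hdR, rfl, rfl⟩ := h
  refine ⟨duL * conj uL - uL * conj duL, ?_⟩
  rw [nhdsWithin_eq_inter_Iio_sup_inter_Ioi hn]
  refine tendsto_sup.2 ⟨(hdL.mul hL.star).sub (hL.mul hdL.star), ?_⟩
  rw [← wronskian_conj_rescale (Real.sqrt_pos.2 hb).ne']
  exact (hdR.mul hR.star).sub (hR.mul hdR.star)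

lemma InterfaceAt.isBoundedUnder_norm {ts bs : ℕ → ℝ} {S : Set ℝ} {u : ℝ → ℂ} {n : ℕ}
    (h : InterfaceAt ts bs S u n) (hn : ts n ∉ S) :
    IsBoundedUnder (· ≤ ·) (𝓝[S] (ts n)) (‖u ·‖) := by
  obtain ⟨uL, uR, -, -, hL, hR, -⟩ := h
  rw [nhdsWithin_eq_inter_Iio_sup_inter_Ioi hn, IsBoundedUnder, map_sup]
  exact isBounded_sup hL.norm.isBoundedUnder_le hR.norm.isBoundedUnder_le

lemma offAtoms_mem_nhds {ts : ℕ → ℝ} (hT : (range ts)ᶜ ∈ codiscrete ℝ) {s τ x : ℝ}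
    (hx : x ∈ Ioo s τ \ range ts) : offAtoms ts (Icc s τ) ∈ 𝓝 x :=
  inter_mem (Icc_mem_nhds hx.1.1 hx.1.2) ((mem_codiscrete'.1 hT).1.mem_nhds hx.2)

lemma uniqueDiffOn_offAtoms {ts : ℕ → ℝ} (hT : (range ts)ᶜ ∈ codiscrete ℝ) {s τ : ℝ}
    (hst : s < τ) : UniqueDiffOn ℝ (offAtoms ts (Icc s τ)) := fun x hx =>
  (uniqueDiffWithinAt_congr (nhdsWithin_diff_of_notMem hT hx.2 _)).2 (uniqueDiffOn_Icc hst x hx.1)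

lemma Icc_subset_closure_offAtoms (ts : ℕ → ℝ) {s τ : ℝ} (hst : s < τ) :
    Icc s τ ⊆ closure (offAtoms ts (Icc s τ)) := by
  refine (closure_Ioo hst.ne).symm.subset.trans (closure_minimal ?_ isClosed_closure)
  refine ((countable_range ts).dense_compl ℝ).open_subset_closure_inter isOpen_Ioo |>.trans ?_
  exact closure_mono fun y hy => ⟨Ioo_subset_Icc_self hy.1, hy.2⟩

lemma apply_mem_interior_Icc {ts : ℕ → ℝ} {s τ : ℝ} (hs : s ∉ range ts) (hτ : τ ∉ range ts)
    {n : ℕ} (hn : ts n ∈ Icc s τ) : ts n ∈ interior (Icc s τ) := by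
  rw [interior_Icc]
  exact ⟨hn.1.lt_of_ne fun h => hs ⟨n, h.symm⟩, hn.2.lt_of_ne fun h => hτ ⟨n, h⟩⟩

namespace IsInterfaceSolution

variable {ts bs : ℕ → ℝ} {z : ℂ} {s τ : ℝ} {u : ℝ → ℂ}

lemma continuousOn_wronConj (hu : IsInterfaceSolution ts bs z (Icc s τ) u)
    (hT : (range ts)ᶜ ∈ codiscrete ℝ) (hst : s < τ) :
    ContinuousOn (wronConj (offAtoms ts (Icc s τ)) u u) (offAtoms ts (Icc s τ)) := by
  have hu0 := hu.1.continuousOn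
  have hu1 := hu.1.continuousOn_derivWithin (uniqueDiffOn_offAtoms hT hst) one_le_two
  exact (hu1.mul hu0.star).sub (hu0.mul hu1.star)

lemma hasDerivAt_wronConj (hu : IsInterfaceSolution ts bs z (Icc s τ) u)
    (hT : (range ts)ᶜ ∈ codiscrete ℝ) (hst : s < τ) {x : ℝ} (hx : x ∈ Ioo s τ \ range ts) :
    HasDerivAt (wronConj (offAtoms ts (Icc s τ)) u u)
      ((conj z - z) * ((‖u x‖ ^ 2 : ℝ) : ℂ)) x := by
  set S := offAtoms ts (Icc s τ)
  obtain ⟨hC2, hODE, -⟩ := hu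
  have hS : S ∈ 𝓝 x := offAtoms_mem_nhds hT hx
  have hxS : x ∈ S := mem_of_mem_nhds hS
  have hu1 : HasDerivAt u (derivWithin u S x) x :=
    (hC2.differentiableOn two_ne_zero x hxS).hasDerivWithinAt.hasDerivAt hS
  have hC1 : ContDiffOn ℝ 1 (derivWithin u S) S :=
    hC2.derivWithin (uniqueDiffOn_offAtoms hT hst) le_rfl
  have hu2 : HasDerivAt (derivWithin u S) (-(z * u x)) x := by
    rw [← hODE x hxS, neg_neg]
    exact (hC1.differentiableOn one_ne_zero x hxS).hasDerivWithinAt.hasDerivAt hS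
  exact hasDerivAt_wronskian_conj hu1 hu2

lemma exists_tendsto_wronConj (hu : IsInterfaceSolution ts bs z (Icc s τ) u)
    (hT : (range ts)ᶜ ∈ codiscrete ℝ) (hbs : ∀ n, 0 < bs n) (hst : s < τ)
    (hs : s ∉ range ts) (hτ : τ ∉ range ts) {x : ℝ} (hx : x ∈ Icc s τ) :
    ∃ L, Tendsto (wronConj (offAtoms ts (Icc s τ)) u u) (𝓝[offAtoms ts (Icc s τ)] x) (𝓝 L) := by
  by_cases hxT : x ∈ range ts
  · obtain ⟨n, rfl⟩ := hxT
    exact (hu.2.2 n (apply_mem_interior_Icc hs hτ hx)).exists_tendsto_wronConj (hbs n)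
      fun h => h.2 ⟨n, rfl⟩
  · exact ⟨_, hu.continuousOn_wronConj hT hst x ⟨hx, hxT⟩⟩

lemma exists_norm_le (hu : IsInterfaceSolution ts bs z (Icc s τ) u) (hs : s ∉ range ts)
    (hτ : τ ∉ range ts) :
    ∃ C, ∀ y ∈ offAtoms ts (Icc s τ), ‖u y‖ ≤ C := by
  have hloc : ∀ x ∈ Icc s τ,
      IsBoundedUnder (· ≤ ·) (𝓝[offAtoms ts (Icc s τ)] x) (‖u ·‖) := by
    intro x hx
    by_cases hxT : x ∈ range ts
    · obtain ⟨n, rfl⟩ := hxT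
      exact (hu.2.2 n (apply_mem_interior_Icc hs hτ hx)).isBoundedUnder_norm
        fun h => h.2 ⟨n, rfl⟩
    · exact (hu.1.continuousOn x ⟨hx, hxT⟩).norm.isBoundedUnder_le
  obtain ⟨C, hC⟩ := isCompact_Icc.exists_bound_of_isBoundedUnder hloc
  exact ⟨C, fun y hy => hC y ⟨hy.1, hy⟩⟩

lemma intervalIntegrable_norm_sq (hu : IsInterfaceSolution ts bs z (Icc s τ) u) (hst : s ≤ τ)
    (hs : s ∉ range ts) (hτ : τ ∉ range ts) :
    IntervalIntegrable (fun r => ‖u r‖ ^ 2) volume s τ := by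
  obtain ⟨C, hC⟩ := hu.exists_norm_le hs hτ
  have hS : MeasurableSet (offAtoms ts (Icc s τ)) :=
    measurableSet_Icc.diff (countable_range ts).measurableSet
  have hSint : IntegrableOn (fun r => ‖u r‖ ^ 2) (offAtoms ts (Icc s τ)) volume := by
    refine .of_bound ((measure_mono sdiff_subset).trans_lt measure_Icc_lt_top)
      ((hu.1.continuousOn.norm.pow 2).aestronglyMeasurable hS) (C ^ 2) ?_
    refine ae_restrict_of_forall_mem hS fun y hy => ?_
    rw [norm_pow, norm_norm]
    exact pow_le_pow_left₀ (norm_nonneg _) (hC y hy) 2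
  rw [intervalIntegrable_iff_integrableOn_Icc_of_le hst]
  exact hSint.congr_set_ae (sdiff_null_ae_eq_self ((countable_range ts).measure_zero volume)).symm

lemma wronConj_sub_eq_integral (hu : IsInterfaceSolution ts bs z (Icc s τ) u)
    (hT : (range ts)ᶜ ∈ codiscrete ℝ) (hbs : ∀ n, 0 < bs n) (hst : s < τ)
    (hs : s ∉ range ts) (hτ : τ ∉ range ts) :
    wronConj (offAtoms ts (Icc s τ)) u u τ - wronConj (offAtoms ts (Icc s τ)) u u s
      = (conj z - z) * ((∫ r in s..τ, ‖u r‖ ^ 2 : ℝ) : ℂ) := by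
  set S := offAtoms ts (Icc s τ)
  -- `E` agrees with `W(u, ū)` off the atoms and takes its two-sided limit at each atom.
  set E := extendFrom S (wronConj S u u)
  have hE : ∀ x ∈ S, E x = wronConj S u u x :=
    extendFrom_extends (hu.continuousOn_wronConj hT hst)
  have hEc : ContinuousOn E (Icc s τ) :=
    continuousOn_extendFrom (Icc_subset_closure_offAtoms ts hst) fun x hx =>
      hu.exists_tendsto_wronConj hT hbs hst hs hτ hx
  have hEd : ∀ x ∈ Ioo s τ \ range ts,
      HasDerivAt E ((conj z - z) * ((‖u x‖ ^ 2 : ℝ) : ℂ)) x := fun x hx =>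
    (hu.hasDerivAt_wronConj hT hst hx).congr_of_eventuallyEq
      (eventually_of_mem (offAtoms_mem_nhds hT hx) hE)
  have hi := hu.intervalIntegrable_norm_sq hst.le hs hτ
  have hFTC := integral_eq_of_hasDerivAt_off_countable_of_le E _ hst.le (countable_range ts) hEc
    hEd ((show IntervalIntegrable (fun r => ((‖u r‖ ^ 2 : ℝ) : ℂ)) volume s τ from
      ⟨hi.1.ofReal, hi.2.ofReal⟩).const_mul (conj z - z))
  rw [← hE τ ⟨right_mem_Icc.2 hst.le, hτ⟩, ← hE s ⟨left_mem_Icc.2 hst.le, hs⟩, ← hFTC,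
    intervalIntegral.integral_const_mul, intervalIntegral.integral_ofReal]

lemma integral_norm_sq_pos (hu : IsInterfaceSolution ts bs z (Icc s τ) u)
    (hT : (range ts)ᶜ ∈ codiscrete ℝ) (hst : s < τ) (hs : s ∉ range ts) (hτ : τ ∉ range ts)
    {x : ℝ} (hx : x ∈ offAtoms ts (Icc s τ)) (hux : u x ≠ 0) :
    0 < ∫ r in s..τ, ‖u r‖ ^ 2 := by
  rw [intervalIntegral.integral_pos_iff_support_of_nonneg_ae
    (Eventually.of_forall fun _ => by positivity) (hu.intervalIntegrable_norm_sq hst.le hs hτ)]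
  refine ⟨hst, ?_⟩
  have hne : {y | u y ≠ 0} ∈ 𝓝[Ioo s τ] x := by
    refine nhdsWithin_mono x Ioo_subset_Icc_self ?_
    rw [← nhdsWithin_diff_of_notMem hT hx.2]
    exact (hu.1.continuousOn x hx).eventually_ne hux
  refine (isOpen_Ioo.measure_pos_of_mem_nhdsWithin volume (by rw [closure_Ioo hst.ne]; exact hx.1)
    (inter_mem hne self_mem_nhdsWithin)).trans_le (measure_mono ?_)
  rintro y ⟨hy, hyI⟩
  exact ⟨by simpa using hy, Ioo_subset_Ioc_self hyI⟩

end IsInterfaceSolution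

/-- for a solution `u` of the interface equation `-u'' = z u` on `[s, τ]`,
`W(u, ū)(τ) - W(u, ū)(s) = (z̄ - z)·∫ₛ^τ |u|²`; in particular, if `Im z > 0`, `τ > s`,
`u(s) = 0` and `u` is not identically zero, then
`W(u, ū)(τ) = -2i·(Im z)·∫ₛ^τ |u|² ≠ 0`. -/
theorem wronskian_conj_identity
    (ts bs : ℕ → ℝ) (γ : ℝ) (hγ : 0 < γ)
    (ht_mono : StrictMono ts) (hgap : ∀ n, γ ≤ ts (n + 1) - ts n)
    (hbs : ∀ n, 1 < bs n)
    (z : ℂ) (s τ : ℝ) (hsτ : s ≤ τ)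
    (hs : s ∉ Set.range ts) (hτ : τ ∉ Set.range ts)
    (u : ℝ → ℂ) (hu : IsInterfaceSolution ts bs z (Icc s τ) u) :
    (wronConj (offAtoms ts (Icc s τ)) u u τ - wronConj (offAtoms ts (Icc s τ)) u u s
        = ((starRingEnd ℂ) z - z) * Complex.ofReal (∫ r in s..τ, ‖u r‖ ^ 2)) ∧
    (0 < z.im → s < τ → u s = 0 → (∃ x ∈ offAtoms ts (Icc s τ), u x ≠ 0) →
      wronConj (offAtoms ts (Icc s τ)) u u τ
          = -2 * Complex.I * (z.im : ℂ) * Complex.ofReal (∫ r in s..τ, ‖u r‖ ^ 2) ∧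
        wronConj (offAtoms ts (Icc s τ)) u u τ ≠ 0) := by
  rcases hsτ.eq_or_lt with rfl | hst
  · exact ⟨by simp, fun _ h => absurd h (lt_irrefl _)⟩
  have hT := ht_mono.compl_range_mem_codiscrete hγ hgap
  have hW := hu.wronConj_sub_eq_integral hT (fun n => one_pos.trans (hbs n)) hst hs hτ
  refine ⟨hW, fun hz _ hus ⟨x, hx, hux⟩ => ?_⟩
  have hWs : wronConj (offAtoms ts (Icc s τ)) u u s = 0 := by simp [wronConj, hus]
  have hconj : conj z - z = -2 * Complex.I * z.im := by
    rw [← neg_sub, Complex.sub_conj]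
    push_cast
    ring
  rw [hWs, sub_zero, hconj] at hW
  refine ⟨hW, hW ▸ ?_⟩
  have hpos := hu.integral_norm_sq_pos hT hst hs hτ hx hux
  simp [hz.ne', hpos.ne', Complex.I_ne_zero]
end

section
/- Nesting of Weyl discs: let z ∈ ℂ with Im z > 0, let a < b₁ ≤ b₂ with a, b₁, b₂ ∉ {t_n : n}, and let u_N, u_D be the solutions of the interface equation −u'' = z u for μ on [a, b₂] with u_N(a) = 1, u_N'(a) = 0, u_D(a) = 0, u_D'(a) = 1. With M(z, b) := W(u_N, ū_D)(b)/W(u_D, ū_D)(b) and r(z, b) := 1/|W(u_D, ū_D)(b)|, the closed disc {m ∈ ℂ : |m − M(z, b₂)| ≤ r(z, b₂)} is contained in the closed disc {m ∈ ℂ : |m − M(z, b₁)| ≤ r(z, b₁)}; in particular r(z, b₂) ≤ r(z, b₁). -/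
open Set Filter Topology MeasureTheory

/-!
Along a solution `h`, Green's identity gives `(W(h, h̄))' = (z̄ - z)|h|²` off the atoms, so
`Im W(h, h̄)` is nonincreasing there when `Im z ≥ 0`; likewise `W(f, g)' = 0`. The interface
map `(u, u') ↦ (√b u, u'/√b)` is real with determinant one, so it preserves `W(f, g)` and
`W(f, ḡ)`: both Wronskians are continuous across the atoms, which are locally finite, hence
`Im W(h, h̄)` is nonincreasing on all of `[a, b₂]` and `W(u_N, u_D) ≡ W(u_N, u_D)(a) = -1`.

Write `A, c, q` for `W(u_N, ū_N), W(u_N, ū_D), W(u_D, ū_D)` at `b`. The Plücker identity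
`A q + |c|² = |W(u_N, u_D)|² = 1` together with `q ∈ iℝ`, `Im q < 0` turns the Weyl disc into
`{m | Im W(h_m, h̄_m)(b) ≥ 0}` for `h_m = u_N - m u_D`, and monotonicity nests these sets.
`Im q < 0` holds because `Im q` vanishes at `a` and strictly decreases just after `a`,
where `u_D ≠ 0`.
-/

open scoped ComplexConjugate

section LocallyFinite

variable {D : Set ℝ} {a b : ℝ}

lemma Icc_diff_mem_nhds (hD : (D ∩ Icc a b).Finite) {x : ℝ} (hx : x ∈ Ioo a b \ D) :
    Icc a b \ D ∈ 𝓝 x := by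
  have hDx : (D ∩ Icc a b)ᶜ ∈ 𝓝 x := hD.isClosed.isOpen_compl.mem_nhds fun h => hx.2 h.1
  filter_upwards [Icc_mem_nhds hx.1.1 hx.1.2, hDx] with y hy hyD
  exact ⟨hy, fun h => hyD ⟨h, hy⟩⟩

lemma Icc_diff_inter_Iio_mem_nhdsLT (hD : (D ∩ Icc a b).Finite) {p : ℝ} (hp : p ∈ Ioc a b) :
    (Icc a b \ D) ∩ Iio p ∈ 𝓝[<] p := by
  have hDp : ((D ∩ Icc a b) \ {p})ᶜ ∈ 𝓝 p :=
    hD.sdiff.isClosed.isOpen_compl.mem_nhds fun h => h.2 rfl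
  filter_upwards [mem_nhdsWithin_of_mem_nhds hDp, Icc_mem_nhdsLT hp.1, self_mem_nhdsWithin]
    with y hyD hy hyp
  have hy' : y ∈ Icc a b := Icc_subset_Icc_right hp.2 hy
  exact ⟨⟨hy', fun h => hyD ⟨⟨h, hy'⟩, hyp.ne⟩⟩, hyp⟩

lemma Icc_diff_inter_Ioi_mem_nhdsGT (hD : (D ∩ Icc a b).Finite) {p : ℝ} (hp : p ∈ Ico a b) :
    (Icc a b \ D) ∩ Ioi p ∈ 𝓝[>] p := by
  have hDp : ((D ∩ Icc a b) \ {p})ᶜ ∈ 𝓝 p :=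
    hD.sdiff.isClosed.isOpen_compl.mem_nhds fun h => h.2 rfl
  filter_upwards [mem_nhdsWithin_of_mem_nhds hDp, Icc_mem_nhdsGT hp.2, self_mem_nhdsWithin]
    with y hyD hy hyp
  have hy' : y ∈ Icc a b := Icc_subset_Icc_left hp.1 hy
  exact ⟨⟨hy', fun h => hyD ⟨⟨h, hy'⟩, hyp.ne'⟩⟩, hyp⟩

lemma uniqueDiffOn_Icc_diff (hD : (D ∩ Icc a b).Finite) (hab : a < b) :
    UniqueDiffOn ℝ (Icc a b \ D) := by
  intro x hx
  have hDx : (D ∩ Icc a b)ᶜ ∈ 𝓝 x := hD.isClosed.isOpen_compl.mem_nhds fun h => hx.2 h.1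
  have hS : Icc a b \ D = Icc a b ∩ (D ∩ Icc a b)ᶜ := by
    ext y
    simp only [Set.mem_sdiff, mem_inter_iff, mem_compl_iff]
    tauto
  rw [hS, uniqueDiffWithinAt_inter hDx]
  exact uniqueDiffOn_Icc hab x hx.1

lemma le_of_hasDerivAt_nonpos_of_inter_Ioo_eq_empty {g g' : ℝ → ℝ}
    (hcont : ContinuousOn g (Icc a b \ D))
    (hderiv : ∀ x ∈ Ioo a b \ D, HasDerivAt g (g' x) x) (hg' : ∀ x ∈ Ioo a b \ D, g' x ≤ 0)
    {x y : ℝ} (hx : x ∈ Icc a b \ D) (hy : y ∈ Icc a b \ D) (hxy : x ≤ y)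
    (hxyD : D ∩ Ioo x y = ∅) : g y ≤ g x := by
  have hIcc : Icc x y ⊆ Icc a b \ D := fun s hs =>
    ⟨⟨hx.1.1.trans hs.1, hs.2.trans hy.1.2⟩, fun hsD => by
      rcases hs.1.eq_or_lt with rfl | hxs
      · exact hx.2 hsD
      rcases hs.2.eq_or_lt with rfl | hsy
      · exact hy.2 hsD
      exact hxyD.subset ⟨hsD, hxs, hsy⟩⟩
  refine antitoneOn_of_hasDerivWithinAt_nonpos (f' := g') (convex_Icc x y) (hcont.mono hIcc)
    (fun s hs => ?_) (fun s hs => ?_) ⟨le_rfl, hxy⟩ ⟨hxy, le_rfl⟩ hxy <;>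
    rw [interior_Icc] at hs <;>
    have hs' : s ∈ Ioo a b \ D :=
      ⟨⟨hx.1.1.trans_lt hs.1, hs.2.trans_le hy.1.2⟩, (hIcc (Ioo_subset_Icc_self hs)).2⟩
  · exact (hderiv s hs').hasDerivWithinAt
  · exact hg' s hs'

lemma le_of_tendsto_nhdsWithin_Iio_Ioi {S : Set ℝ} {g : ℝ → ℝ} {x p y L : ℝ}
    [(𝓝[S ∩ Iio p] p).NeBot] [(𝓝[S ∩ Ioi p] p).NeBot] (hxp : x < p) (hpy : p < y)
    (hL_lt : Tendsto g (𝓝[S ∩ Iio p] p) (𝓝 L)) (hL_gt : Tendsto g (𝓝[S ∩ Ioi p] p) (𝓝 L))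
    (hleft : ∀ s ∈ S ∩ Ioo x p, g s ≤ g x) (hright : ∀ s ∈ S ∩ Ioo p y, g y ≤ g s) :
    g y ≤ g x := by
  have hyL : g y ≤ L := ge_of_tendsto hL_gt <| by
    filter_upwards [self_mem_nhdsWithin, nhdsWithin_le_nhds (Iio_mem_nhds hpy)] with s hs hsy
    exact hright s ⟨hs.1, hs.2, hsy⟩
  have hLx : L ≤ g x := le_of_tendsto hL_lt <| by
    filter_upwards [self_mem_nhdsWithin, nhdsWithin_le_nhds (Ioi_mem_nhds hxp)] with s hs hxs
    exact hleft s ⟨hs.1, hxs, hs.2⟩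
  exact hyL.trans hLx

theorem antitoneOn_Icc_diff_of_hasDerivAt_nonpos {g g' : ℝ → ℝ} (hD : (D ∩ Icc a b).Finite)
    (hcont : ContinuousOn g (Icc a b \ D))
    (hderiv : ∀ x ∈ Ioo a b \ D, HasDerivAt g (g' x) x) (hg' : ∀ x ∈ Ioo a b \ D, g' x ≤ 0)
    (hjump : ∀ p ∈ D ∩ Ioo a b, ∃ L, Tendsto g (𝓝[(Icc a b \ D) ∩ Iio p] p) (𝓝 L) ∧
      Tendsto g (𝓝[(Icc a b \ D) ∩ Ioi p] p) (𝓝 L)) :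
    AntitoneOn g (Icc a b \ D) := by
  set S := Icc a b \ D
  -- induction on the largest point of `D` between `x` and `y`
  have key : ∀ F : Finset ℝ, ∀ x ∈ S, ∀ y ∈ S, x ≤ y → D ∩ Ioo x y ⊆ F → g y ≤ g x := by
    intro F
    induction F using Finset.induction_on_max with
    | empty =>
      intro x hx y hy hxy hxyD
      exact le_of_hasDerivAt_nonpos_of_inter_Ioo_eq_empty hcont hderiv hg' hx hy hxy
        (subset_empty_iff.1 (by simpa using hxyD))
    | insert p F hFp ih =>
      intro x hx y hy hxy hxyD
      by_cases hp : p ∈ D ∩ Ioo x y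
      swap
      · refine ih x hx y hy hxy fun q hq => ?_
        rcases Finset.mem_insert.1 (hxyD hq) with rfl | hqF
        exacts [absurd hq hp, hqF]
      have hpab : p ∈ Ioo a b := ⟨hx.1.1.trans_lt hp.2.1, hp.2.2.trans_le hy.1.2⟩
      obtain ⟨L, hL_lt, hL_gt⟩ := hjump p ⟨hp.1, hpab⟩
      have : (𝓝[S ∩ Iio p] p).NeBot := (inferInstance : (𝓝[<] p).NeBot).mono
        (nhdsWithin_le_of_mem (Icc_diff_inter_Iio_mem_nhdsLT hD (Ioo_subset_Ioc_self hpab)))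
      have : (𝓝[S ∩ Ioi p] p).NeBot := (inferInstance : (𝓝[>] p).NeBot).mono
        (nhdsWithin_le_of_mem (Icc_diff_inter_Ioi_mem_nhdsGT hD (Ioo_subset_Ico_self hpab)))
      refine le_of_tendsto_nhdsWithin_Iio_Ioi hp.2.1 hp.2.2 hL_lt hL_gt
        (fun s hs => ih x hx s hs.1 hs.2.1.le fun q hq => ?_)
        (fun s hs => ih s hs.1 y hy hs.2.2.le fun q hq => ?_)
      · rcases Finset.mem_insert.1 (hxyD ⟨hq.1, hq.2.1, hq.2.2.trans (hs.2.2.trans hp.2.2)⟩)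
          with rfl | hqF
        exacts [absurd (hq.2.2.trans hs.2.2) (lt_irrefl q), hqF]
      · rcases Finset.mem_insert.1 (hxyD ⟨hq.1, hp.2.1.trans (hs.2.1.trans hq.2.1), hq.2.2⟩)
          with rfl | hqF
        exacts [absurd (hs.2.1.trans hq.2.1) (lt_irrefl q),
          absurd ((hFp q hqF).trans (hs.2.1.trans hq.2.1)) (lt_irrefl q)]
  intro x hx y hy hxy
  exact key hD.toFinset x hx y hy hxy fun q hq =>
    hD.mem_toFinset.2 ⟨hq.1, hx.1.1.trans hq.2.1.le, hq.2.2.le.trans hy.1.2⟩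

end LocallyFinite

lemma tendsto_atTop_of_le_sub {u : ℕ → ℝ} {γ : ℝ} (hγ : 0 < γ)
    (hgap : ∀ n, γ ≤ u (n + 1) - u n) : Tendsto u atTop atTop := by
  have hlin : ∀ n : ℕ, u 0 + n * γ ≤ u n := by
    intro n
    induction n with
    | zero => simp
    | succ n ih => push_cast; linarith [hgap n]
  exact tendsto_atTop_mono hlin
    (tendsto_atTop_add_const_left _ _ (tendsto_natCast_atTop_atTop.atTop_mul_const hγ))

lemma Filter.Tendsto.finite_range_inter_Iic {u : ℕ → ℝ} (hu : Tendsto u atTop atTop) (b : ℝ) :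
    (range u ∩ Iic b).Finite := by
  have hfin : {n | u n ≤ b}.Finite := by
    simpa [← Nat.cofinite_eq_atTop] using hu.eventually_gt_atTop b
  refine (hfin.image u).subset ?_
  rintro _ ⟨⟨n, rfl⟩, hn⟩
  exact ⟨n, hn, rfl⟩

section Wronskian

variable {S : Set ℝ} {f g : ℝ → ℂ} {r : ℝ}

lemma re_wronConj_self : (wronConj S f f r).re = 0 := by
  simp only [wronConj, Complex.sub_re, Complex.mul_re, Complex.conj_re, Complex.conj_im]
  ring

/-- The Plücker identity for the four Wronskians of `f, g, f̄, ḡ`. -/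
lemma wronConj_mul_wronConj_add_mul_conj :
    wronConj S f f r * wronConj S g g r + wronConj S f g r * conj (wronConj S f g r)
      = wron S f g r * conj (wron S f g r) := by
  simp only [wronConj, wron, map_sub, map_mul, Complex.conj_conj]
  ring

lemma derivWithin_sub_const_mul_eqOn (hf : DifferentiableOn ℝ f S) (hg : DifferentiableOn ℝ g S)
    (m : ℂ) :
    EqOn (derivWithin (fun r => f r - m * g r) S)
      (fun r => derivWithin f S r - m * derivWithin g S r) S := fun r hr => by
  rw [derivWithin_fun_sub (hf r hr) ((hg r hr).const_mul m), derivWithin_const_mul m (hg r hr)]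

lemma wronConj_sub_const_mul_self (hf : DifferentiableOn ℝ f S) (hg : DifferentiableOn ℝ g S)
    (m : ℂ) (hr : r ∈ S) :
    wronConj S (fun r => f r - m * g r) (fun r => f r - m * g r) r
      = wronConj S f f r - conj m * wronConj S f g r + m * conj (wronConj S f g r)
        + m * conj m * wronConj S g g r := by
  simp only [wronConj, derivWithin_sub_const_mul_eqOn hf hg m hr, map_sub, map_mul,
    Complex.conj_conj]
  ring

end Wronskian

namespace InterfaceAt

variable {ts bs : ℕ → ℝ} {S : Set ℝ} {f g : ℝ → ℂ} {n : ℕ}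

lemma exists_tendsto_wron (hf : InterfaceAt ts bs S f n)
    (hg : InterfaceAt ts bs S g n) (hb : 0 < bs n) :
    ∃ L, Tendsto (wron S f g) (𝓝[S ∩ Iio (ts n)] (ts n)) (𝓝 L) ∧
      Tendsto (wron S f g) (𝓝[S ∩ Ioi (ts n)] (ts n)) (𝓝 L) := by
  obtain ⟨fL, _, dfL, _, hfL, hfR, hdfL, hdfR, rfl, rfl⟩ := hf
  obtain ⟨gL, _, dgL, _, hgL, hgR, hdgL, hdgR, rfl, rfl⟩ := hg
  have hc : (Real.sqrt (bs n) : ℂ) ≠ 0 := by exact_mod_cast (Real.sqrt_pos.2 hb).ne'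
  refine ⟨dfL * gL - fL * dgL, (hdfL.mul hgL).sub (hfL.mul hdgL), ?_⟩
  convert (hdfR.mul hgR).sub (hfR.mul hdgR) using 2
  · rfl
  · field_simp

lemma exists_tendsto_wronConj_s7 (hf : InterfaceAt ts bs S f n)
    (hg : InterfaceAt ts bs S g n) (hb : 0 < bs n) :
    ∃ L, Tendsto (wronConj S f g) (𝓝[S ∩ Iio (ts n)] (ts n)) (𝓝 L) ∧
      Tendsto (wronConj S f g) (𝓝[S ∩ Ioi (ts n)] (ts n)) (𝓝 L) := by
  obtain ⟨fL, _, dfL, _, hfL, hfR, hdfL, hdfR, rfl, rfl⟩ := hf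
  obtain ⟨gL, _, dgL, _, hgL, hgR, hdgL, hdgR, rfl, rfl⟩ := hg
  have hc : (Real.sqrt (bs n) : ℂ) ≠ 0 := by exact_mod_cast (Real.sqrt_pos.2 hb).ne'
  have hconj := Complex.continuous_conj.tendsto
  refine ⟨dfL * conj gL - fL * conj dgL,
    (hdfL.mul ((hconj _).comp hgL)).sub (hfL.mul ((hconj _).comp hdgL)), ?_⟩
  convert (hdfR.mul ((hconj _).comp hgR)).sub (hfR.mul ((hconj _).comp hdgR)) using 2
  · rfl
  · simp only [map_mul, map_div₀, Complex.conj_ofReal]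
    field_simp

end InterfaceAt

namespace IsInterfaceSolution

variable {ts bs : ℕ → ℝ} {z : ℂ} {J : Set ℝ} {a b s : ℝ} {u f g : ℝ → ℂ}

lemma hasDerivAt (hu : IsInterfaceSolution ts bs z J u) (hs : offAtoms ts J ∈ 𝓝 s) :
    HasDerivAt u (derivWithin u (offAtoms ts J) s) s := by
  rw [derivWithin_of_mem_nhds hs]
  exact ((hu.1.differentiableOn (by norm_num)).differentiableAt hs).hasDerivAt

lemma hasDerivAt_derivWithin (hu : IsInterfaceSolution ts bs z J u)
    (hud : UniqueDiffOn ℝ (offAtoms ts J)) (hs : offAtoms ts J ∈ 𝓝 s) :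
    HasDerivAt (derivWithin u (offAtoms ts J)) (-(z * u s)) s := by
  rw [← hu.2.1 s (mem_of_mem_nhds hs), neg_neg, derivWithin_of_mem_nhds hs]
  exact (((hu.1.derivWithin hud (m := 1) (by norm_num)).differentiableOn
    (by norm_num)).differentiableAt hs).hasDerivAt

lemma sub_const_mul (hf : IsInterfaceSolution ts bs z J f) (hg : IsInterfaceSolution ts bs z J g)
    (hud : UniqueDiffOn ℝ (offAtoms ts J)) (m : ℂ) :
    IsInterfaceSolution ts bs z J (fun r => f r - m * g r) := by
  set S := offAtoms ts J
  have hd := derivWithin_sub_const_mul_eqOn (hf.1.differentiableOn (by norm_num))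
    (hg.1.differentiableOn (by norm_num)) m
  refine ⟨hf.1.sub (contDiffOn_const.mul hg.1), fun x hx => ?_, fun n hn => ?_⟩
  · have hf' := (hf.1.derivWithin hud (m := 1) (by norm_num)).differentiableOn (by norm_num)
    have hg' := (hg.1.derivWithin hud (m := 1) (by norm_num)).differentiableOn (by norm_num)
    rw [derivWithin_congr hd (hd hx), derivWithin_fun_sub (hf' x hx) ((hg' x hx).const_mul m),
      derivWithin_const_mul m (hg' x hx)]
    linear_combination hf.2.1 x hx - m * hg.2.1 x hx
  · obtain ⟨fL, fR, dfL, dfR, hfL, hfR, hdfL, hdfR, hfLR, hdfLR⟩ := hf.2.2 n hn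
    obtain ⟨gL, gR, dgL, dgR, hgL, hgR, hdgL, hdgR, hgLR, hdgLR⟩ := hg.2.2 n hn
    have hdeq : ∀ T, derivWithin (fun r => f r - m * g r) S =ᶠ[𝓝[S ∩ T] (ts n)]
        fun r => derivWithin f S r - m * derivWithin g S r := fun T =>
      eventually_nhdsWithin_of_forall fun r hr => hd hr.1
    refine ⟨fL - m * gL, fR - m * gR, dfL - m * dgL, dfR - m * dgR,
      hfL.sub (hgL.const_mul m), hfR.sub (hgR.const_mul m),
      ((hdfL.sub (hdgL.const_mul m)).congr' (hdeq _).symm),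
      ((hdfR.sub (hdgR.const_mul m)).congr' (hdeq _).symm), ?_, ?_⟩
    · rw [hfLR, hgLR]; ring
    · rw [hdfLR, hdgLR]; ring

lemma hasDerivAt_wron (hf : IsInterfaceSolution ts bs z J f) (hg : IsInterfaceSolution ts bs z J g)
    (hud : UniqueDiffOn ℝ (offAtoms ts J)) (hs : offAtoms ts J ∈ 𝓝 s) :
    HasDerivAt (wron (offAtoms ts J) f g) 0 s :=
  (((hf.hasDerivAt_derivWithin hud hs).mul (hg.hasDerivAt hs)).sub
    ((hf.hasDerivAt hs).mul (hg.hasDerivAt_derivWithin hud hs))).congr_deriv (by ring)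

lemma hasDerivAt_wronConj_s7 (hf : IsInterfaceSolution ts bs z J f)
    (hg : IsInterfaceSolution ts bs z J g) (hud : UniqueDiffOn ℝ (offAtoms ts J))
    (hs : offAtoms ts J ∈ 𝓝 s) :
    HasDerivAt (wronConj (offAtoms ts J) f g) ((conj z - z) * (f s * conj (g s))) s := by
  refine (((hf.hasDerivAt_derivWithin hud hs).mul (hg.hasDerivAt hs).star).sub
    ((hf.hasDerivAt hs).mul (hg.hasDerivAt_derivWithin hud hs).star)).congr_deriv ?_
  simp only [← starRingEnd_apply, map_neg, map_mul]
  ring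

lemma hasDerivAt_im_wronConj_self (hu : IsInterfaceSolution ts bs z J u)
    (hud : UniqueDiffOn ℝ (offAtoms ts J)) (hs : offAtoms ts J ∈ 𝓝 s) :
    HasDerivAt (fun r => (wronConj (offAtoms ts J) u u r).im) (-(2 * z.im * ‖u s‖ ^ 2)) s := by
  refine (Complex.imCLM.hasFDerivAt.comp_hasDerivAt s
    (hu.hasDerivAt_wronConj_s7 hu hud hs)).congr_deriv ?_
  rw [Complex.mul_conj, Complex.normSq_eq_norm_sq]
  simp only [Complex.imCLM_apply, Complex.mul_im, Complex.sub_re, Complex.sub_im,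
    Complex.conj_re, Complex.conj_im, Complex.ofReal_re, Complex.ofReal_im]
  ring

lemma continuousOn_wron (hf : IsInterfaceSolution ts bs z J f)
    (hg : IsInterfaceSolution ts bs z J g) (hud : UniqueDiffOn ℝ (offAtoms ts J)) :
    ContinuousOn (wron (offAtoms ts J) f g) (offAtoms ts J) :=
  ((hf.1.continuousOn_derivWithin hud (by norm_num)).mul hg.1.continuousOn).sub
    (hf.1.continuousOn.mul (hg.1.continuousOn_derivWithin hud (by norm_num)))

lemma continuousOn_wronConj_s7 (hf : IsInterfaceSolution ts bs z J f)
    (hg : IsInterfaceSolution ts bs z J g) (hud : UniqueDiffOn ℝ (offAtoms ts J)) :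
    ContinuousOn (wronConj (offAtoms ts J) f g) (offAtoms ts J) :=
  ((hf.1.continuousOn_derivWithin hud (by norm_num)).mul
      (Complex.continuous_conj.comp_continuousOn hg.1.continuousOn)).sub
    (hf.1.continuousOn.mul (Complex.continuous_conj.comp_continuousOn
      (hg.1.continuousOn_derivWithin hud (by norm_num))))

lemma wron_eq (hfin : (range ts ∩ Icc a b).Finite) (hab : a < b) (hbs : ∀ n, 0 < bs n)
    (hf : IsInterfaceSolution ts bs z (Icc a b) f) (hg : IsInterfaceSolution ts bs z (Icc a b) g)
    {x y : ℝ} (hx : x ∈ offAtoms ts (Icc a b)) (hy : y ∈ offAtoms ts (Icc a b)) :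
    wron (offAtoms ts (Icc a b)) f g x = wron (offAtoms ts (Icc a b)) f g y := by
  have hud := uniqueDiffOn_Icc_diff hfin hab
  have hanti (e : ℂ →L[ℝ] ℝ) :
      AntitoneOn (fun r => e (wron (offAtoms ts (Icc a b)) f g r)) (offAtoms ts (Icc a b)) := by
    refine antitoneOn_Icc_diff_of_hasDerivAt_nonpos (g' := fun _ => 0) hfin
      (e.continuous.comp_continuousOn (hf.continuousOn_wron hg hud))
      (fun s hs => ?_) (fun _ _ => le_rfl) (fun p hp => ?_)
    · exact (e.hasFDerivAt.comp_hasDerivAt s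
        (hf.hasDerivAt_wron hg hud (Icc_diff_mem_nhds hfin hs))).congr_deriv (map_zero e)
    · obtain ⟨n, rfl⟩ := hp.1
      have hn : ts n ∈ interior (Icc a b) := by rw [interior_Icc]; exact hp.2
      obtain ⟨L, hL_lt, hL_gt⟩ := (hf.2.2 n hn).exists_tendsto_wron (hg.2.2 n hn) (hbs n)
      exact ⟨e L, (e.continuous.tendsto L).comp hL_lt, (e.continuous.tendsto L).comp hL_gt⟩
  have heq (e : ℂ →L[ℝ] ℝ) : e (wron (offAtoms ts (Icc a b)) f g x)
      = e (wron (offAtoms ts (Icc a b)) f g y) := by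
    rcases le_total x y with hxy | hyx
    · exact le_antisymm (by simpa using hanti (-e) hx hy hxy) (hanti e hx hy hxy)
    · exact le_antisymm (hanti e hy hx hyx) (by simpa using hanti (-e) hy hx hyx)
  exact Complex.ext (heq Complex.reCLM) (heq Complex.imCLM)

lemma antitoneOn_im_wronConj_self (hfin : (range ts ∩ Icc a b).Finite) (hab : a < b)
    (hbs : ∀ n, 0 < bs n) (hz : 0 ≤ z.im) (hu : IsInterfaceSolution ts bs z (Icc a b) u) :
    AntitoneOn (fun r => (wronConj (offAtoms ts (Icc a b)) u u r).im) (offAtoms ts (Icc a b)) := by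
  have hud := uniqueDiffOn_Icc_diff hfin hab
  refine antitoneOn_Icc_diff_of_hasDerivAt_nonpos hfin
    (Complex.continuous_im.comp_continuousOn (hu.continuousOn_wronConj_s7 hu hud))
    (fun s hs => hu.hasDerivAt_im_wronConj_self hud (Icc_diff_mem_nhds hfin hs))
    (fun s _ => neg_nonpos.2 (by positivity)) (fun p hp => ?_)
  obtain ⟨n, rfl⟩ := hp.1
  have hn : ts n ∈ interior (Icc a b) := by rw [interior_Icc]; exact hp.2
  obtain ⟨L, hL_lt, hL_gt⟩ := (hu.2.2 n hn).exists_tendsto_wronConj_s7 (hu.2.2 n hn) (hbs n)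
  exact ⟨L.im, (Complex.continuous_im.tendsto L).comp hL_lt,
    (Complex.continuous_im.tendsto L).comp hL_gt⟩

lemma im_wronConj_self_neg (hfin : (range ts ∩ Icc a b).Finite) (hab : a < b)
    (hbs : ∀ n, 0 < bs n) (hz : 0 < z.im) (hu : IsInterfaceSolution ts bs z (Icc a b) u)
    (ha : a ∉ range ts) (hu₀ : u a = 0) (hu₁ : derivWithin u (offAtoms ts (Icc a b)) a ≠ 0)
    {x : ℝ} (hx : x ∈ offAtoms ts (Icc a b)) (hax : a < x) :
    (wronConj (offAtoms ts (Icc a b)) u u x).im < 0 := by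
  set S := offAtoms ts (Icc a b)
  have hud := uniqueDiffOn_Icc_diff hfin hab
  have haS : a ∈ S := ⟨⟨le_rfl, hab.le⟩, ha⟩
  have hSa : S ∩ Ioi a ∈ 𝓝[>] a := Icc_diff_inter_Ioi_mem_nhdsGT hfin ⟨le_rfl, hab⟩
  have hne : ∀ᶠ s in 𝓝[>] a, u s ≠ 0 := by
    refine (((hu.1.differentiableOn (by norm_num)) a haS).hasDerivWithinAt.eventually_ne hu₁
      (c := 0)).filter_mono (nhdsWithin_le_of_mem ?_)
    exact mem_of_superset hSa fun s hs => ⟨hs.1, hs.2.ne'⟩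
  obtain ⟨c, hac, hc⟩ := mem_nhdsGT_iff_exists_Ioo_subset.1
    ((hne.and hSa).and (nhdsWithin_le_nhds (Iio_mem_nhds hax)))
  have hs₁ : (a + c) / 2 ∈ Ioo a c := by
    have : a < c := hac
    constructor <;> linarith
  set s₁ := (a + c) / 2
  have hIcc : Icc a s₁ ⊆ S := fun s hs => by
    rcases hs.1.eq_or_lt with rfl | has
    · exact haS
    · exact (hc ⟨has, hs.2.trans_lt hs₁.2⟩).1.2.1
  have hstrict : StrictAntiOn (fun r => (wronConj S u u r).im) (Icc a s₁) := by
    refine strictAntiOn_of_hasDerivWithinAt_neg (f' := fun s => -(2 * z.im * ‖u s‖ ^ 2))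
      (convex_Icc a s₁)
      ((Complex.continuous_im.comp_continuousOn (hu.continuousOn_wronConj_s7 hu hud)).mono hIcc)
      (fun s hs => ?_) (fun s hs => ?_) <;> rw [interior_Icc] at hs
    · have hsS : s ∈ Ioo a b \ range ts :=
        ⟨⟨hs.1, hs.2.trans_le (hIcc ⟨hs₁.1.le, le_rfl⟩).1.2⟩, (hIcc (Ioo_subset_Icc_self hs)).2⟩
      exact (hu.hasDerivAt_im_wronConj_self hud (Icc_diff_mem_nhds hfin hsS)).hasDerivWithinAt
    · have hus : u s ≠ 0 := (hc ⟨hs.1, hs.2.trans hs₁.2⟩).1.1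
      have : 0 < ‖u s‖ := norm_pos_iff.2 hus
      exact neg_neg_of_pos (by positivity)
  have hq₀ : (wronConj S u u a).im = 0 := by simp [wronConj, hu₀]
  calc (wronConj S u u x).im
      ≤ (wronConj S u u s₁).im :=
        hu.antitoneOn_im_wronConj_self hfin hab hbs hz.le (hIcc ⟨hs₁.1.le, le_rfl⟩) hx
          (hc hs₁).2.le
    _ < (wronConj S u u a).im := hstrict ⟨le_rfl, hs₁.1.le⟩ ⟨hs₁.1.le, le_rfl⟩ hs₁.1
    _ = 0 := hq₀

end IsInterfaceSolution

lemma norm_sub_div_le_one_div_norm_iff {A c q m : ℂ} (hre : q.re = 0) (him : q.im < 0)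
    (hP : A * q + c * conj c = 1) :
    ‖m - c / q‖ ≤ 1 / ‖q‖ ↔ 0 ≤ (A - conj m * c + m * conj c + m * conj m * q).im := by
  have hq : q ≠ 0 := fun h => by simp [h] at him
  have hcq : conj q = -q := Complex.ext (by simp [hre]) (by simp)
  have hid : A - conj m * c + m * conj c + m * conj m * q
      = q * ((‖m - c / q‖ ^ 2 - (1 / ‖q‖) ^ 2 : ℝ) : ℂ) := by
    have hw : ((‖m - c / q‖ ^ 2 : ℝ) : ℂ) = (m - c / q) * (conj m + conj c / q) := by
      rw [Complex.ofReal_pow, ← Complex.mul_conj', map_sub, map_div₀, hcq]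
      ring
    have hq2 : ((‖q‖ ^ 2 : ℝ) : ℂ) = -q ^ 2 := by
      rw [Complex.ofReal_pow, ← Complex.mul_conj', hcq]
      ring
    rw [Complex.ofReal_sub, hw, div_pow, one_pow, Complex.ofReal_div, Complex.ofReal_one, hq2]
    field_simp
    linear_combination hP
  have hqn : 0 < ‖q‖ := norm_pos_iff.2 hq
  rw [hid, Complex.im_mul_ofReal, ← sq_le_sq₀ (norm_nonneg _) (by positivity)]
  constructor <;> intro h <;> nlinarith

lemma norm_sub_wronConj_div_le_iff {S : Set ℝ} {f g : ℝ → ℂ} {b : ℝ}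
    (hf : DifferentiableOn ℝ f S) (hg : DifferentiableOn ℝ g S) (hb : b ∈ S)
    (hW : ‖wron S f g b‖ = 1) (hq : (wronConj S g g b).im < 0) (m : ℂ) :
    ‖m - wronConj S f g b / wronConj S g g b‖ ≤ 1 / ‖wronConj S g g b‖ ↔
      0 ≤ (wronConj S (fun r => f r - m * g r) (fun r => f r - m * g r) b).im := by
  rw [wronConj_sub_const_mul_self hf hg m hb]
  refine norm_sub_div_le_one_div_norm_iff re_wronConj_self hq ?_
  rw [wronConj_mul_wronConj_add_mul_conj, Complex.mul_conj', hW]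
  simp

theorem weyl_disc_nesting_general
    (ts bs : ℕ → ℝ) (γ : ℝ) (hγ : 0 < γ)
    (hgap : ∀ n, γ ≤ ts (n + 1) - ts n)
    (hbs : ∀ n, 1 < bs n)
    (z : ℂ) (hz : 0 < z.im) (a b₁ b₂ : ℝ) (hab : a < b₁) (hb12 : b₁ ≤ b₂)
    (ha : a ∉ Set.range ts) (hb₁ : b₁ ∉ Set.range ts) (hb₂ : b₂ ∉ Set.range ts)
    (uN uD : ℝ → ℂ)
    (huN : IsInterfaceSolution ts bs z (Icc a b₂) uN)
    (huD : IsInterfaceSolution ts bs z (Icc a b₂) uD)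
    (hNa : uN a = 1)
    (hDa : uD a = 0) (hDa' : derivWithin uD (offAtoms ts (Icc a b₂)) a = 1) :
    {m : ℂ | norm (m - wronConj (offAtoms ts (Icc a b₂)) uN uD b₂
          / wronConj (offAtoms ts (Icc a b₂)) uD uD b₂)
        ≤ 1 / norm (wronConj (offAtoms ts (Icc a b₂)) uD uD b₂)}
      ⊆ {m : ℂ | norm (m - wronConj (offAtoms ts (Icc a b₂)) uN uD b₁
          / wronConj (offAtoms ts (Icc a b₂)) uD uD b₁)
        ≤ 1 / norm (wronConj (offAtoms ts (Icc a b₂)) uD uD b₁)} ∧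
    1 / norm (wronConj (offAtoms ts (Icc a b₂)) uD uD b₂)
      ≤ 1 / norm (wronConj (offAtoms ts (Icc a b₂)) uD uD b₁) := by
  set S := offAtoms ts (Icc a b₂)
  have hab₂ : a < b₂ := hab.trans_le hb12
  have hfin : (range ts ∩ Icc a b₂).Finite :=
    ((tendsto_atTop_of_le_sub hγ hgap).finite_range_inter_Iic b₂).subset
      (inter_subset_inter_right _ Icc_subset_Iic_self)
  have hbs₀ (n : ℕ) : 0 < bs n := one_pos.trans (hbs n)
  have hud : UniqueDiffOn ℝ S := uniqueDiffOn_Icc_diff hfin hab₂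
  have haS : a ∈ S := ⟨⟨le_rfl, hab₂.le⟩, ha⟩
  have hb₁S : b₁ ∈ S := ⟨⟨hab.le, hb12⟩, hb₁⟩
  have hb₂S : b₂ ∈ S := ⟨⟨hab₂.le, le_rfl⟩, hb₂⟩
  have hq₁ : (wronConj S uD uD b₁).im < 0 :=
    huD.im_wronConj_self_neg hfin hab₂ hbs₀ hz ha hDa (by rw [hDa']; exact one_ne_zero) hb₁S hab
  have hq₁₂ : (wronConj S uD uD b₂).im ≤ (wronConj S uD uD b₁).im :=
    huD.antitoneOn_im_wronConj_self hfin hab₂ hbs₀ hz.le hb₁S hb₂S hb12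
  have hq₂ : (wronConj S uD uD b₂).im < 0 := hq₁₂.trans_lt hq₁
  have hW (b : ℝ) (hb : b ∈ S) : ‖wron S uN uD b‖ = 1 := by
    rw [huN.wron_eq hfin hab₂ hbs₀ huD hb haS]
    change ‖derivWithin uN S a * uD a - uN a * derivWithin uD S a‖ = 1
    simp [hNa, hDa, hDa']
  have hdisc (b : ℝ) (hb : b ∈ S) := norm_sub_wronConj_div_le_iff
    (huN.1.differentiableOn (by norm_num)) (huD.1.differentiableOn (by norm_num)) hb (hW b hb)
  refine ⟨fun m hm => (hdisc b₁ hb₁S hq₁ m).2 ?_, ?_⟩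
  · exact ((hdisc b₂ hb₂S hq₂ m).1 hm).trans
      ((huN.sub_const_mul huD hud m).antitoneOn_im_wronConj_self hfin hab₂ hbs₀ hz.le
        hb₁S hb₂S hb12)
  · rw [← Complex.abs_im_eq_norm.2 re_wronConj_self, ← Complex.abs_im_eq_norm.2 re_wronConj_self,
      abs_of_neg hq₁, abs_of_neg hq₂]
    exact one_div_le_one_div_of_le (neg_pos.2 hq₁) (neg_le_neg hq₁₂)

/-- nesting of Weyl discs: for `Im z > 0` and `a < b₁ ≤ b₂`, the closed
Weyl disc at `b₂` is contained in the closed Weyl disc at `b₁`; in particular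
`r(z, b₂) ≤ r(z, b₁)`. -/
theorem weyl_disc_nesting
    (ts bs : ℕ → ℝ) (γ : ℝ) (hγ : 0 < γ)
    (ht_mono : StrictMono ts) (hgap : ∀ n, γ ≤ ts (n + 1) - ts n)
    (hbs : ∀ n, 1 < bs n)
    (z : ℂ) (hz : 0 < z.im) (a b₁ b₂ : ℝ) (hab : a < b₁) (hb12 : b₁ ≤ b₂)
    (ha : a ∉ Set.range ts) (hb₁ : b₁ ∉ Set.range ts) (hb₂ : b₂ ∉ Set.range ts)
    (uN uD : ℝ → ℂ)
    (huN : IsInterfaceSolution ts bs z (Icc a b₂) uN)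
    (huD : IsInterfaceSolution ts bs z (Icc a b₂) uD)
    (hNa : uN a = 1) (hNa' : derivWithin uN (offAtoms ts (Icc a b₂)) a = 0)
    (hDa : uD a = 0) (hDa' : derivWithin uD (offAtoms ts (Icc a b₂)) a = 1) :
    {m : ℂ | norm (m - wronConj (offAtoms ts (Icc a b₂)) uN uD b₂
          / wronConj (offAtoms ts (Icc a b₂)) uD uD b₂)
        ≤ 1 / norm (wronConj (offAtoms ts (Icc a b₂)) uD uD b₂)}
      ⊆ {m : ℂ | norm (m - wronConj (offAtoms ts (Icc a b₂)) uN uD b₁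
          / wronConj (offAtoms ts (Icc a b₂)) uD uD b₁)
        ≤ 1 / norm (wronConj (offAtoms ts (Icc a b₂)) uD uD b₁)} ∧
    1 / norm (wronConj (offAtoms ts (Icc a b₂)) uD uD b₂)
      ≤ 1 / norm (wronConj (offAtoms ts (Icc a b₂)) uD uD b₁) :=
  weyl_disc_nesting_general ts bs γ hγ hgap hbs z hz a b₁ b₂ hab hb12 ha hb₁ hb₂ uN uD huN huD hNa
    hDa hDa'
end
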